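/- Let n ≥ 2, let A be an invertible n×n real matrix with factorization A = [[L̂, 0],[ℓᵀ, 1]]·[[Û, u],[0, p]] where L̂ is (n−1)×(n−1) lower unitriangular, Û is (n−1)×(n−1) invertible upper triangular, and ℓ, u ∈ ℝ^{n−1}. Fix an index j < n and ε ∈ ℝ, and suppose A + ε·e_n e_jᵀ admits an LU factorization whose last pivot is p_ε^{(n,j)}. Then p_ε^{(n,j)} = p − ε·(Û⁻¹u)_j. -/

import Mathlib

open Matrix

/-- `M` is lower triangular with all diagonal entries equal to `1`. -/
def IsLowerUnitri {k : ℕ} (M : Matrix (Fin k) (Fin k) ℝ) : Prop :=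
  (∀ i, M i i = 1) ∧ ∀ i j : Fin k, i < j → M i j = 0

/-- `M` is upper triangular. -/
def IsUpperTri {k : ℕ} (M : Matrix (Fin k) (Fin k) ℝ) : Prop :=
  ∀ i j : Fin k, j < i → M i j = 0

/-- The block matrix `[[L̂, 0],[ℓᵀ, 1]] * [[Û, u],[0, p]]`, viewed as an
`(m+1) × (m+1)` matrix. -/
noncomputable def blockLU {m : ℕ} (Lhat Uhat : Matrix (Fin m) (Fin m) ℝ)
    (l u : Fin m → ℝ) (p : ℝ) : Matrix (Fin (m + 1)) (Fin (m + 1)) ℝ :=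
  Matrix.reindex finSumFinEquiv finSumFinEquiv
    (Matrix.fromBlocks Lhat 0 (Matrix.of fun (_ : Fin 1) i => l i)
        (Matrix.of fun (_ : Fin 1) (_ : Fin 1) => (1 : ℝ)) *
      Matrix.fromBlocks Uhat (Matrix.of fun i (_ : Fin 1) => u i) 0
        (Matrix.of fun (_ : Fin 1) (_ : Fin 1) => p))

lemma det_isUpperTri {k : ℕ} {M : Matrix (Fin k) (Fin k) ℝ} (h : IsUpperTri M) :
    M.det = ∏ i, M i i :=
  Matrix.det_of_upperTriangular (fun i j hij => h i j hij)

lemma det_isLowerUnitri {k : ℕ} {M : Matrix (Fin k) (Fin k) ℝ} (h : IsLowerUnitri M) :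
    M.det = 1 := by
  rw [Matrix.det_of_lowerTriangular M (fun i j hij => h.2 i j hij)]
  simp [h.1]

theorem stmt_2 {m : ℕ} (hm : 1 ≤ m)
    (Lhat Uhat : Matrix (Fin m) (Fin m) ℝ)
    (hLhat : IsLowerUnitri Lhat) (hUhat : IsUpperTri Uhat) (hUdet : IsUnit Uhat.det)
    (l u : Fin m → ℝ) (p : ℝ)
    (A : Matrix (Fin (m + 1)) (Fin (m + 1)) ℝ)
    (hA : A = blockLU Lhat Uhat l u p)
    (hAdet : IsUnit A.det)
    (j : Fin m) (ε : ℝ)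
    (L' U' : Matrix (Fin (m + 1)) (Fin (m + 1)) ℝ)
    (hL' : IsLowerUnitri L') (hU' : IsUpperTri U')
    (hfact : A + Matrix.single (Fin.last m) j.castSucc ε = L' * U') :
    U' (Fin.last m) (Fin.last m) = p - ε * (Uhat⁻¹ *ᵥ u) j := by
  have hLdet : IsUnit Lhat.det := by rw [det_isLowerUnitri hLhat]; exact isUnit_one
  set e : Fin m ⊕ Fin 1 ≃ Fin (m + 1) := finSumFinEquiv with he
  have he1 : ∀ i : Fin m, e (Sum.inl i) = i.castSucc := fun i => rfl
  have he2 : ∀ k : Fin 1, e (Sum.inr k) = Fin.last m := by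
    intro k; fin_cases k; simp [he, Fin.ext_iff]
  -- blocks
  set lrow : Matrix (Fin 1) (Fin m) ℝ := Matrix.of fun _ i => l i with hlrow
  set ucol : Matrix (Fin m) (Fin 1) ℝ := Matrix.of fun i _ => u i with hucol
  set onep : Matrix (Fin 1) (Fin 1) ℝ := Matrix.of fun _ _ => (1 : ℝ) with honep
  set pblk : Matrix (Fin 1) (Fin 1) ℝ := Matrix.of fun _ _ => p with hpblk
  set erow : Matrix (Fin 1) (Fin m) ℝ := Matrix.of fun _ i => if i = j then ε else 0 with herow
  set B : Matrix (Fin m ⊕ Fin 1) (Fin m ⊕ Fin 1) ℝ := Matrix.fromBlocks Lhat 0 lrow onep with hB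
  set C : Matrix (Fin m ⊕ Fin 1) (Fin m ⊕ Fin 1) ℝ := Matrix.fromBlocks Uhat ucol 0 pblk with hC
  have hAsub : A.submatrix e e = B * C := by
    rw [hA]
    simp [blockLU, Matrix.reindex_apply, Matrix.submatrix_submatrix, he]
    rfl
  have hstd : (Matrix.single (Fin.last m) j.castSucc ε).submatrix e e
      = Matrix.fromBlocks 0 0 erow 0 := by
    ext i k
    rcases i with a | a <;> rcases k with b | b
    · simp [Matrix.single, Matrix.submatrix_apply, he1,
        (Fin.castSucc_lt_last a).ne']
    · simp [Matrix.single, Matrix.submatrix_apply, he1, he2,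
        (Fin.castSucc_lt_last a).ne']
    · simp [Matrix.single, Matrix.submatrix_apply, he1, he2, herow,
        Fin.castSucc_inj, eq_comm]
    · simp [Matrix.single, Matrix.submatrix_apply, he2,
        (Fin.castSucc_lt_last j).ne]
  have hM : B * C + Matrix.fromBlocks 0 0 erow 0
      = L'.submatrix e e * U'.submatrix e e := by
    have h : A.submatrix e e + (Matrix.single (Fin.last m) j.castSucc ε).submatrix e e
        = (L' * U').submatrix e e := by
      rw [← hfact]; ext i k; simp only [Matrix.submatrix_apply, Matrix.add_apply]
    rw [hAsub, hstd] at h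
    rw [h, ← Matrix.submatrix_mul_equiv L' U' e e e]
  -- block structure of L' and U'
  set L11 : Matrix (Fin m) (Fin m) ℝ := Matrix.of fun i k => L' i.castSucc k.castSucc with hL11
  set U11 : Matrix (Fin m) (Fin m) ℝ := Matrix.of fun i k => U' i.castSucc k.castSucc with hU11
  set L21 : Matrix (Fin 1) (Fin m) ℝ := Matrix.of fun _ k => L' (Fin.last m) k.castSucc with hL21
  set U12 : Matrix (Fin m) (Fin 1) ℝ := Matrix.of fun i _ => U' i.castSucc (Fin.last m) with hU12
  set qblk : Matrix (Fin 1) (Fin 1) ℝ :=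
    Matrix.of fun _ _ => U' (Fin.last m) (Fin.last m) with hqblk
  have hL1 : L'.submatrix e e = Matrix.fromBlocks L11 0 L21 onep := by
    ext i k
    rcases i with a | a <;> rcases k with b | b <;>
      simp [Matrix.submatrix_apply, he1, he2, hL11, hL21, honep]
    · exact hL'.2 _ _ (Fin.castSucc_lt_last a)
    · exact hL'.1 _
  have hU1 : U'.submatrix e e = Matrix.fromBlocks U11 U12 0 qblk := by
    ext i k
    rcases i with a | a <;> rcases k with b | b <;>
      simp [Matrix.submatrix_apply, he1, he2, hU11, hU12, hqblk]
    exact hU' _ _ (Fin.castSucc_lt_last b)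
  -- top-left block equation
  have h11 : Lhat * Uhat = L11 * U11 := by
    have h := congrArg Matrix.toBlocks₁₁ hM
    simpa [hL1, hU1, hB, hC, Matrix.fromBlocks_multiply, Matrix.fromBlocks_add,
      Matrix.toBlocks_fromBlocks₁₁] using h
  have hdetL11 : L11.det = 1 := by
    refine det_isLowerUnitri ⟨fun i => hL'.1 _, fun i k hik => hL'.2 _ _ ?_⟩
    exact Fin.castSucc_lt_castSucc_iff.mpr hik
  have hdetU11 : U11.det = Uhat.det := by
    have := congrArg Matrix.det h11
    rw [Matrix.det_mul, Matrix.det_mul, det_isLowerUnitri hLhat, hdetL11, one_mul, one_mul] at this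
    exact this.symm
  -- Schur form of LHS
  set X : Matrix (Fin m) (Fin m) ℝ := Lhat * Uhat with hX
  have hXdet : IsUnit X.det := by rw [hX, Matrix.det_mul]; exact hLdet.mul hUdet
  haveI : Invertible X := X.invertibleOfIsUnitDet hXdet
  have hform : B * C + Matrix.fromBlocks 0 0 erow 0
      = Matrix.fromBlocks X (Lhat * ucol) (lrow * Uhat + erow) (lrow * ucol + onep * pblk) := by
    simp [hB, hC, Matrix.fromBlocks_multiply, Matrix.fromBlocks_add, hX]
  -- compute the Schur complement
  have hschur : (lrow * ucol + onep * pblk) - (lrow * Uhat + erow) * ⅟X * (Lhat * ucol)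
      = onep * pblk - erow * (Uhat⁻¹ * ucol) := by
    rw [Matrix.invOf_eq_nonsing_inv, hX, Matrix.mul_inv_rev]
    have key : (lrow * Uhat + erow) * (Uhat⁻¹ * Lhat⁻¹) * (Lhat * ucol)
        = lrow * ucol + erow * (Uhat⁻¹ * ucol) := by
      simp only [Matrix.mul_assoc]
      rw [Matrix.nonsing_inv_mul_cancel_left _ _ hLdet, Matrix.add_mul,
        Matrix.mul_assoc lrow, Matrix.mul_nonsing_inv_cancel_left _ _ hUdet]
    rw [key]
    abel
  -- determinant of LHS
  have hdetLHS : (B * C + Matrix.fromBlocks 0 0 erow 0).det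
      = Uhat.det * (p - ε * (Uhat⁻¹ *ᵥ u) j) := by
    rw [hform, Matrix.det_fromBlocks₁₁, hschur]
    have h1 : (onep * pblk - erow * (Uhat⁻¹ * ucol)).det = p - ε * (Uhat⁻¹ *ᵥ u) j := by
      rw [Matrix.det_fin_one]
      simp [honep, hpblk, herow, hucol, Matrix.mul_apply, Matrix.sub_apply, Matrix.mulVec,
        dotProduct, ite_mul, Finset.sum_ite_eq', mul_comm]
    rw [h1, hX, Matrix.det_mul, det_isLowerUnitri hLhat, one_mul]
  -- determinant of RHS
  have hdetRHS : (L'.submatrix e e * U'.submatrix e e).det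
      = Uhat.det * U' (Fin.last m) (Fin.last m) := by
    rw [Matrix.det_mul, Matrix.det_submatrix_equiv_self, Matrix.det_submatrix_equiv_self,
      det_isLowerUnitri hL', one_mul, det_isUpperTri hU', Fin.prod_univ_castSucc]
    congr 1
    rw [← hdetU11,
      det_isUpperTri (M := U11) fun i k hik => hU' _ _ (Fin.castSucc_lt_castSucc_iff.mpr hik)]
    rfl
  have := hM ▸ hdetLHS
  rw [hdetRHS] at this
  exact (mul_left_cancel₀ hUdet.ne_zero this.symm).symm
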